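/- arXiv:1208.5273 — 2 statements merged into one kernel-verified Lean document; each statement's English description precedes it below -/
import Mathlib

section
/- Lower bound on the shift. Let f, g ∈ Ψ be (0,1)-interpolating, let ω be an averaging kernel with ‖ω‖∞ < ∞, let α ∈ ℝ, and let (hf, hg) ∈ 𝒳² be such that (f, g) is a consistent travelling-wave solution with shift α. Then |A(hf, hg)| ≤ |α|·‖ω‖∞. -/
open MeasureTheory Filter Set

noncomputable section

/-- Convolution `(f ⊗ ω)(x) = ∫ y, f y · ω (x − y)`. -/
def conv (f ω : ℝ → ℝ) (x : ℝ) : ℝ := ∫ y : ℝ, f y * ω (x - y)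

/-- `ω` is an averaging kernel: even, nonnegative, of bounded variation, integrating to 1. -/
def IsAveragingKernel (ω : ℝ → ℝ) : Prop :=
  (∀ x, ω (-x) = ω x) ∧ (∀ x, 0 ≤ ω x) ∧ BoundedVariationOn ω Set.univ ∧
    MeasureTheory.Integrable ω ∧ (∫ x : ℝ, ω x) = 1

/-- The essential supremum `‖ω‖∞` of a kernel, as a real number. -/
def kerSup (ω : ℝ → ℝ) : ℝ := (eLpNorm ω ⊤ MeasureTheory.volume).toReal

/-- `ω` is regular: for some `W ∈ (0,∞]`, it vanishes outside `[−W, W]` and is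
positive on `(−W, W)` (the case `W = ∞` being that `ω` is everywhere positive). -/
def IsRegularKernel (ω : ℝ → ℝ) : Prop :=
  (∀ x, 0 < ω x) ∨
    ∃ W : ℝ, 0 < W ∧ (∀ x, W < |x| → ω x = 0) ∧ (∀ x, |x| < W → 0 < ω x)

/-- Membership in `𝒳`: nondecreasing self-maps of `[0,1]`. -/
def MemX (h : ℝ → ℝ) : Prop :=
  MonotoneOn h (Icc 0 1) ∧ MapsTo h (Icc 0 1) (Icc 0 1)

/-- Left limit `h(u−)` of `h ∈ 𝒳` at `u ∈ [0,1]`, with the convention `h(0−) = 0`. -/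
def lm (h : ℝ → ℝ) (u : ℝ) : ℝ := if u ≤ 0 then 0 else sSup (h '' Ico 0 u)

/-- Right limit `h(u+)` of `h ∈ 𝒳` at `u ∈ [0,1]`, with the convention `h(1+) = 1`. -/
def rm (h : ℝ → ℝ) (u : ℝ) : ℝ := if 1 ≤ u then 1 else sInf (h '' Ioc u 1)

/-- A canonical generalized inverse of `h ∈ 𝒳` (any valid inverse has the same integrals,
so the potential below is unambiguous). -/
def Xinv (h : ℝ → ℝ) (v : ℝ) : ℝ := sInf ({1} ∪ {u ∈ Icc (0:ℝ) 1 | v ≤ h u})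

/-- The potential `Φ(hf, hg; u, v) = ∫₀ᵘ hg⁻¹ + ∫₀ᵛ hf⁻¹ − u·v`. -/
def Pot (hf hg : ℝ → ℝ) (u v : ℝ) : ℝ :=
  (∫ x in (0:ℝ)..u, Xinv hg x) + (∫ x in (0:ℝ)..v, Xinv hf x) - u * v

/-- `A(hf, hg) = Φ(hf, hg; 1, 1)`. -/
def Agap (hf hg : ℝ → ℝ) : ℝ := Pot hf hg 1 1

/-- `(u,v)` is a crossing point of `(hf, hg)`:
`u ∈ [hg(v−), hg(v+)]` and `v ∈ [hf(u−), hf(u+)]`. -/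
def IsCrossing (hf hg : ℝ → ℝ) (u v : ℝ) : Prop :=
  u ∈ Icc (0:ℝ) 1 ∧ v ∈ Icc (0:ℝ) 1 ∧
    u ∈ Icc (lm hg v) (rm hg v) ∧ v ∈ Icc (lm hf u) (rm hf u)

/-- The strictly positive gap condition: there is a nontrivial crossing point, and every
nontrivial crossing point satisfies `Φ(hf, hg; u, v) > max {0, A(hf, hg)}`. -/
def StrictPosGap (hf hg : ℝ → ℝ) : Prop :=
  (∃ u v, IsCrossing hf hg u v ∧ ¬(u = 0 ∧ v = 0) ∧ ¬(u = 1 ∧ v = 1)) ∧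
    ∀ u v, IsCrossing hf hg u v → ¬(u = 0 ∧ v = 0) → ¬(u = 1 ∧ v = 1) →
      max 0 (Agap hf hg) < Pot hf hg u v

/-- Membership in `Ψ`: nondecreasing functions `ℝ → [0,1]`. -/
def MemPsi (f : ℝ → ℝ) : Prop := Monotone f ∧ ∀ x, f x ∈ Icc (0:ℝ) 1

/-- `f` is `(a,b)`-interpolating: limits `a` at `−∞` and `b` at `+∞`. -/
def Interpolates (f : ℝ → ℝ) (a b : ℝ) : Prop :=
  Filter.Tendsto f Filter.atBot (nhds a) ∧ Filter.Tendsto f Filter.atTop (nhds b)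

/-- `(f, g)` is a consistent travelling-wave solution with shift `α` for `(hf, hg)`
and kernel `ω`. -/
def ConsistentWave (hf hg f g ω : ℝ → ℝ) (α : ℝ) : Prop :=
  (∀ x, f x ∈ Icc (lm hf (conv g ω (x + α))) (rm hf (conv g ω (x + α)))) ∧
    (∀ x, g x ∈ Icc (lm hg (conv f ω x)) (rm hg (conv f ω x)))


/-!
Write `u = f ⊗ ω`, `v = (g ⊗ ω)(· + α)` and `df, dg, du, dv` for the Lebesgue–Stieltjes
probability measures. The continuous distribution functions `u`, `v` push `du`, `dv` forward to
the uniform law on `[0,1]`, and the wave equations say `g = hg ∘ u` `du`-a.e. and `f = hf ∘ v`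
`dv`-a.e. Hence `∫₀¹ hg = ∫ g du = 1 - ∫ u dg` by integration by parts, and likewise
`∫₀¹ hf = 1 - ∫ v df`; together with `∫₀¹ h⁻¹ + ∫₀¹ h = 1` this gives
`A = ∫ u dg + ∫ v df - 1`. Writing `f ⊗ ω` and `g ⊗ ω` as `df`- and `dg`-averages of the
distribution function `K` of `ω`, the symmetry `K(s) + K(-s) = 1` turns `∫ v df` into
`1 - ∫ u(· - α) dg`, so `A = ∫ (u - u(· - α)) dg`. Finally `u` is an average of translates of `K`,
which is `‖ω‖∞`-Lipschitz.
-/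

open Topology

namespace IsAveragingKernel

variable {ω : ℝ → ℝ}

lemma even (hω : IsAveragingKernel ω) (x : ℝ) : ω (-x) = ω x := hω.1 x

lemma nonneg (hω : IsAveragingKernel ω) (x : ℝ) : 0 ≤ ω x := hω.2.1 x

lemma integrable (hω : IsAveragingKernel ω) : Integrable ω := hω.2.2.2.1

lemma integral_eq_one (hω : IsAveragingKernel ω) : ∫ x, ω x = 1 := hω.2.2.2.2

lemma measurable (hω : IsAveragingKernel ω) : Measurable ω := by
  obtain ⟨p, q, hp, hq, rfl⟩ :=
    hω.2.2.1.locallyBoundedVariationOn.exists_monotoneOn_sub_monotoneOn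
  exact (monotoneOn_univ.1 hp).measurable.sub (monotoneOn_univ.1 hq).measurable

end IsAveragingKernel

lemma ae_norm_le_kerSup {ω : ℝ → ℝ} (hm : AEStronglyMeasurable ω)
    (hfin : eLpNorm ω ⊤ volume ≠ ⊤) : ∀ᵐ t, ‖ω t‖ ≤ kerSup ω := by
  rw [kerSup, toReal_eLpNorm hm]
  exact ae_le_lpNorm_exponent_top ⟨hm, hfin.lt_top⟩

def kerCDF (ω : ℝ → ℝ) (s : ℝ) : ℝ := ∫ t in Iic s, ω t

section kerCDF

variable {ω : ℝ → ℝ}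

lemma kerCDF_monotone (hω : IsAveragingKernel ω) : Monotone (kerCDF ω) := fun _ _ hst =>
  setIntegral_mono_set hω.integrable.integrableOn (ae_of_all _ hω.nonneg)
    (Iic_subset_Iic.2 hst).eventuallyLE

lemma kerCDF_add_kerCDF_neg (hω : IsAveragingKernel ω) (s : ℝ) :
    kerCDF ω s + kerCDF ω (-s) = 1 := by
  have h : kerCDF ω (-s) = ∫ t in (Iic s)ᶜ, ω t := by
    rw [compl_Iic, ← neg_neg s, ← integral_comp_neg_Iic, neg_neg, kerCDF]
    simp only [hω.even]
  rw [h, kerCDF, integral_add_compl measurableSet_Iic hω.integrable, hω.integral_eq_one]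

lemma kerCDF_mem_Icc (hω : IsAveragingKernel ω) (s : ℝ) : kerCDF ω s ∈ Icc 0 1 := by
  have hnonneg (s : ℝ) : 0 ≤ kerCDF ω s :=
    setIntegral_nonneg measurableSet_Iic fun t _ => hω.nonneg t
  have := kerCDF_add_kerCDF_neg hω s
  exact ⟨hnonneg s, by linarith [hnonneg (-s)]⟩

lemma abs_kerCDF_sub_le (hω : IsAveragingKernel ω) (hfin : eLpNorm ω ⊤ volume ≠ ⊤) (s β : ℝ) :
    |kerCDF ω s - kerCDF ω (s - β)| ≤ |β| * kerSup ω := by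
  have h := intervalIntegral.norm_integral_le_of_norm_le_const_ae (a := s - β) (b := s)
    ((ae_norm_le_kerSup hω.measurable.aestronglyMeasurable hfin).mono fun t ht _ => ht)
  rw [kerCDF, kerCDF, intervalIntegral.integral_Iic_sub_Iic hω.integrable.integrableOn
    hω.integrable.integrableOn, mul_comm]
  rwa [sub_sub_cancel, Real.norm_eq_abs] at h

lemma integrable_kerCDF_comp {X : Type*} [MeasurableSpace X] {μ : Measure X} [IsFiniteMeasure μ]
    (hω : IsAveragingKernel ω) {φ : X → ℝ} (hφ : Measurable φ) :
    Integrable (fun x => kerCDF ω (φ x)) μ :=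
  Integrable.of_mem_Icc 0 1 ((kerCDF_monotone hω).measurable.comp hφ).aemeasurable
    (ae_of_all _ fun x => kerCDF_mem_Icc hω (φ x))

end kerCDF

section Stieltjes

variable {f u : ℝ → ℝ}

lemma Interpolates.comp_add_const {a b : ℝ} (hI : Interpolates f a b) (c : ℝ) :
    Interpolates (fun x => f (x + c)) a b :=
  ⟨hI.1.comp (tendsto_atBot_add_const_right _ c tendsto_id),
    hI.2.comp (tendsto_atTop_add_const_right _ c tendsto_id)⟩

lemma MemPsi.monotone (hf : MemPsi f) : Monotone f := hf.1

lemma Monotone.mem_Icc_of_interpolates (hf : Monotone f) (hI : Interpolates f 0 1) (x : ℝ) :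
    f x ∈ Icc 0 1 :=
  ⟨hf.le_of_tendsto hI.1 x, hf.ge_of_tendsto hI.2 x⟩

lemma Monotone.isProbabilityMeasure_stieltjes (hf : Monotone f) (hI : Interpolates f 0 1) :
    IsProbabilityMeasure hf.stieltjesFunction.measure :=
  hf.stieltjesFunction.isProbabilityMeasure (tendsto_rightLim_atBot_of_tendsto hI.1)
    (tendsto_rightLim_atTop_of_tendsto hI.2)

lemma Monotone.measureReal_stieltjes_Iic (hf : Monotone f) (hI : Interpolates f 0 1) (x : ℝ) :
    hf.stieltjesFunction.measure.real (Iic x) = Function.rightLim f x := by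
  rw [measureReal_def, StieltjesFunction.measure_Iic _ (tendsto_rightLim_atBot_of_tendsto hI.1),
    sub_zero, Monotone.stieltjesFunction_eq, ENNReal.toReal_ofReal]
  exact (hf.mem_Icc_of_interpolates hI x).1.trans (hf.le_rightLim le_rfl)

lemma Monotone.ae_continuousAt_sub (hf : Monotone f) (c : ℝ) :
    ∀ᵐ t, ContinuousAt f (c - t) := by
  have hnull := (hf.countable_not_continuousAt.preimage
    (sub_right_injective (b := c))).measure_zero volume
  filter_upwards [measure_eq_zero_iff_ae_notMem.1 hnull] with t ht
  simpa using ht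

lemma Monotone.coe_stieltjesFunction_of_continuous (hu : Monotone u) (huc : Continuous u) :
    (hu.stieltjesFunction : ℝ → ℝ) = u :=
  funext fun _ => huc.continuousWithinAt.rightLim_eq

lemma Monotone.nullSingletonClass_stieltjes (hu : Monotone u) (huc : Continuous u) :
    NullSingletonClass hu.stieltjesFunction.measure :=
  ⟨fun x => by
    rw [StieltjesFunction.measure_singleton, hu.coe_stieltjesFunction_of_continuous huc,
      huc.continuousWithinAt.leftLim_eq, sub_self, ENNReal.ofReal_zero]⟩

lemma Monotone.measureReal_stieltjes_Iio (hu : Monotone u) (huc : Continuous u)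
    (hI : Interpolates u 0 1) (x : ℝ) : hu.stieltjesFunction.measure.real (Iio x) = u x := by
  have := hu.nullSingletonClass_stieltjes huc
  rw [measureReal_congr Iio_ae_eq_Iic, hu.measureReal_stieltjes_Iic hI,
    huc.continuousWithinAt.rightLim_eq]

end Stieltjes

section Convolution

variable {f ω : ℝ → ℝ}

lemma conv_eq_integral_sub (f ω : ℝ → ℝ) (c : ℝ) : conv f ω c = ∫ t, f (c - t) * ω t := by
  rw [conv, ← integral_sub_left_eq_self _ volume c]
  simp only [sub_sub_cancel]

lemma conv_eq_integral_kerCDF (hω : IsAveragingKernel ω) (hf : Monotone f)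
    (hI : Interpolates f 0 1) (c : ℝ) :
    conv f ω c = ∫ y, kerCDF ω (c - y) ∂hf.stieltjesFunction.measure := by
  set μ := hf.stieltjesFunction.measure
  have := hf.isProbabilityMeasure_stieltjes hI
  have hswap (t y : ℝ) :
      (Iic (c - y)).indicator ω t = (Iic (c - t)).indicator (fun _ => ω t) y := by
    simp only [indicator, mem_Iic, le_sub_comm]
  have hint : Integrable (Function.uncurry fun t y => (Iic (c - y)).indicator ω t)
      (volume.prod μ) := by
    refine (hω.integrable.comp_fst μ).mono ?_ (ae_of_all _ fun p => norm_indicator_le_norm_self _ _)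
    exact ((hω.measurable.comp measurable_fst).indicator
      (measurableSet_le measurable_fst (measurable_const.sub measurable_snd))).aestronglyMeasurable
  calc conv f ω c = ∫ t, f (c - t) * ω t := conv_eq_integral_sub f ω c
    _ = ∫ t, ∫ y, (Iic (c - y)).indicator ω t ∂μ := by
        refine integral_congr_ae ((hf.ae_continuousAt_sub c).mono fun t ht => ?_)
        simp only [hswap t, integral_indicator_const _ measurableSet_Iic, smul_eq_mul]
        rw [hf.measureReal_stieltjes_Iic hI, ht.continuousWithinAt.rightLim_eq]
    _ = ∫ y, ∫ t, (Iic (c - y)).indicator ω t ∂volume ∂μ := integral_integral_swap hint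
    _ = ∫ y, kerCDF ω (c - y) ∂μ := by simp only [integral_indicator measurableSet_Iic, kerCDF]

lemma monotone_conv (hω : IsAveragingKernel ω) (hf : Monotone f) (hI : Interpolates f 0 1) :
    Monotone (conv f ω) := fun c d hcd => by
  have := hf.isProbabilityMeasure_stieltjes hI
  rw [conv_eq_integral_kerCDF hω hf hI, conv_eq_integral_kerCDF hω hf hI]
  exact integral_mono (integrable_kerCDF_comp hω (measurable_const.sub measurable_id))
    (integrable_kerCDF_comp hω (measurable_const.sub measurable_id))
    fun y => kerCDF_monotone hω (sub_le_sub_right hcd y)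

lemma tendsto_conv (hω : IsAveragingKernel ω) (hf : MemPsi f) {l : Filter ℝ}
    [l.IsCountablyGenerated] {F : ℝ → ℝ} (hF : ∀ᵐ t, Tendsto (fun x => f (x - t)) l (𝓝 (F t))) :
    Tendsto (conv f ω) l (𝓝 (∫ t, F t * ω t)) := by
  rw [show conv f ω = _ from funext (conv_eq_integral_sub f ω)]
  refine tendsto_integral_filter_of_dominated_convergence ω (Eventually.of_forall fun x => ?_)
    (Eventually.of_forall fun x => ae_of_all _ fun t => ?_) hω.integrable
    (hF.mono fun t ht => ht.mul_const _)
  · exact ((hf.monotone.measurable.comp (measurable_const.sub measurable_id)).mul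
      hω.measurable).aestronglyMeasurable
  · rw [norm_mul, Real.norm_of_nonneg (hf.2 _).1, Real.norm_of_nonneg (hω.nonneg t)]
    exact mul_le_of_le_one_left (hω.nonneg t) (hf.2 _).2

lemma continuous_conv (hω : IsAveragingKernel ω) (hf : MemPsi f) : Continuous (conv f ω) :=
  continuous_iff_continuousAt.2 fun x => by
    have := tendsto_conv hω hf (F := fun t => f (x - t)) ((hf.monotone.ae_continuousAt_sub x).mono
      fun t ht => ht.tendsto.comp ((continuous_sub_right t).tendsto x))
    rwa [← conv_eq_integral_sub] at this

lemma interpolates_conv (hω : IsAveragingKernel ω) (hf : MemPsi f) (hI : Interpolates f 0 1) :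
    Interpolates (conv f ω) 0 1 := by
  have hshift (t : ℝ) : Interpolates (fun x => f (x - t)) 0 1 := by
    simpa only [sub_eq_add_neg] using hI.comp_add_const (-t)
  constructor
  · simpa using tendsto_conv hω hf (ae_of_all _ fun t => (hshift t).1)
  · simpa [hω.integral_eq_one] using tendsto_conv hω hf (ae_of_all _ fun t => (hshift t).2)

end Convolution

section StieltjesPairing

variable {u g : ℝ → ℝ}

theorem integral_stieltjes_add_integral_stieltjes (hu : Monotone u) (huc : Continuous u)
    (huI : Interpolates u 0 1) (hg : Monotone g) (hgI : Interpolates g 0 1) :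
    ∫ x, g x ∂hu.stieltjesFunction.measure + ∫ y, u y ∂hg.stieltjesFunction.measure = 1 := by
  set μ := hu.stieltjesFunction.measure
  set ν := hg.stieltjesFunction.measure
  have := hu.isProbabilityMeasure_stieltjes huI
  have := hg.isProbabilityMeasure_stieltjes hgI
  have := hu.nullSingletonClass_stieltjes huc
  -- The two integrals are the masses of `{y ≤ x}` and of its complement under `μ ⊗ ν`.
  set S := {p : ℝ × ℝ | p.2 ≤ p.1}
  have hS : MeasurableSet S := measurableSet_le measurable_snd measurable_fst
  have hg_ae : ∀ᵐ x ∂μ, g x = ν.real (Iic x) := by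
    filter_upwards [measure_eq_zero_iff_ae_notMem.1
      (hg.countable_not_continuousAt.measure_zero μ)] with x hx
    rw [hg.measureReal_stieltjes_Iic hgI, (not_not.1 hx).continuousWithinAt.rightLim_eq]
  have h_left : ∫ x, g x ∂μ = (μ.prod ν).real S := by
    rw [integral_congr_ae hg_ae, measureReal_def, Measure.prod_apply hS,
      ← integral_toReal (measurable_measure_prodMk_left hS).aemeasurable
        (ae_of_all _ fun _ => measure_lt_top _ _)]
    rfl
  have h_right : ∫ y, u y ∂ν = (μ.prod ν).real Sᶜ := by
    have hIio (y : ℝ) : (fun x => (x, y)) ⁻¹' Sᶜ = Iio y := by ext; simp [S]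
    simp_rw [← hu.measureReal_stieltjes_Iio huc huI]
    rw [measureReal_def, Measure.prod_apply_symm hS.compl,
      ← integral_toReal (measurable_measure_prodMk_right hS.compl).aemeasurable
        (ae_of_all _ fun _ => measure_lt_top _ _)]
    simp only [hIio]
    rfl
  rw [h_left, h_right, measureReal_add_measureReal_compl hS, probReal_univ]

lemma Monotone.preimage_Iic_eq_Iic (hu : Monotone u) (huc : Continuous u) {t : ℝ}
    (hne : (u ⁻¹' Iic t).Nonempty) (hb : ∃ b, t < u b) :
    ∃ s, u ⁻¹' Iic t = Iic s ∧ u s = t := by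
  obtain ⟨b, hb⟩ := hb
  have hbdd : BddAbove (u ⁻¹' Iic t) := ⟨b, fun x hx => (hu.reflect_lt (lt_of_le_of_lt hx hb)).le⟩
  have hs : sSup (u ⁻¹' Iic t) ∈ u ⁻¹' Iic t :=
    (isClosed_Iic.preimage huc).csSup_mem hne hbdd
  refine ⟨_, Subset.antisymm (fun x hx => le_csSup hbdd hx) (fun x hx => (hu hx).trans hs),
    le_antisymm hs ?_⟩
  obtain ⟨s', hs'⟩ := intermediate_value_univ _ b huc ⟨hs, hb.le⟩
  exact hs'.symm.le.trans (hu (le_csSup hbdd (show u s' ≤ t from hs'.le)))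

lemma Monotone.map_stieltjes_eq_volume_restrict (hu : Monotone u) (huc : Continuous u)
    (huI : Interpolates u 0 1) :
    hu.stieltjesFunction.measure.map u = volume.restrict (Ioc 0 1) := by
  have := hu.isProbabilityMeasure_stieltjes huI
  refine Measure.ext_of_Iic _ _ fun t => ?_
  rw [Measure.map_apply huc.measurable measurableSet_Iic, Measure.restrict_apply measurableSet_Iic]
  rcases le_or_gt 1 t with ht | ht
  · have hpre : u ⁻¹' Iic t = univ :=
      eq_univ_of_forall fun x => (hu.mem_Icc_of_interpolates huI x).2.trans ht
    rw [hpre, measure_univ, inter_eq_right.2 fun x hx => hx.2.trans ht, Real.volume_Ioc, sub_zero,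
      ENNReal.ofReal_one]
  rw [Iic_inter_Ioc_of_le ht.le, Real.volume_Ioc, sub_zero]
  rcases (u ⁻¹' Iic t).eq_empty_or_nonempty with hS | hS
  · have ht0 : t ≤ 0 := by
      by_contra! h
      obtain ⟨x, hx⟩ := (huI.1.eventually (eventually_lt_nhds h)).exists
      exact hS.subset (show u x ≤ t from hx.le)
    rw [hS, measure_empty, ENNReal.ofReal_of_nonpos ht0]
  · obtain ⟨s, hs, hus⟩ :=
      hu.preimage_Iic_eq_Iic huc hS (huI.2.eventually (eventually_gt_nhds ht)).exists
    rw [hs, ← ofReal_measureReal, hu.measureReal_stieltjes_Iic huI,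
      huc.continuousWithinAt.rightLim_eq, hus]

end StieltjesPairing

def unitIccExtend (h : ℝ → ℝ) : ℝ → ℝ := IccExtend zero_le_one ((Icc (0 : ℝ) 1).domRestrict h)

section ClassX

variable {h : ℝ → ℝ}

lemma unitIccExtend_of_mem {x : ℝ} (hx : x ∈ Icc 0 1) : unitIccExtend h x = h x :=
  IccExtend_of_mem _ _ hx

lemma MemX.monotone_unitIccExtend (hh : MemX h) : Monotone (unitIccExtend h) :=
  Monotone.IccExtend _ hh.1.monotone

lemma MemX.le_lm (hh : MemX h) {w : ℝ} (hw : w ∈ Ioc 0 1)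
    (hc : ContinuousAt (unitIccExtend h) w) : h w ≤ lm h w := by
  rw [lm, if_neg hw.1.not_ge, ← unitIccExtend_of_mem (h := h) (Ioc_subset_Icc_self hw)]
  refine le_of_tendsto (hc.tendsto.mono_left nhdsWithin_le_nhds : Tendsto _ (𝓝[<] w) _) ?_
  filter_upwards [Ioo_mem_nhdsLT hw.1] with x hx
  rw [unitIccExtend_of_mem ⟨hx.1.le, hx.2.le.trans hw.2⟩]
  exact le_csSup ⟨1, forall_mem_image.2 fun y hy => (hh.2 ⟨hy.1, hy.2.le.trans hw.2⟩).2⟩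
    (mem_image_of_mem h ⟨hx.1.le, hx.2⟩)

lemma MemX.rm_le (hh : MemX h) {w : ℝ} (hw : w ∈ Ico 0 1)
    (hc : ContinuousAt (unitIccExtend h) w) : rm h w ≤ h w := by
  rw [rm, if_neg hw.2.not_ge, ← unitIccExtend_of_mem (h := h) (Ico_subset_Icc_self hw)]
  refine ge_of_tendsto (hc.tendsto.mono_left nhdsWithin_le_nhds : Tendsto _ (𝓝[>] w) _) ?_
  filter_upwards [Ioo_mem_nhdsGT hw.2] with x hx
  rw [unitIccExtend_of_mem ⟨hw.1.trans hx.1.le, hx.2.le⟩]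
  exact csInf_le ⟨0, forall_mem_image.2 fun y hy => (hh.2 ⟨hw.1.trans hy.1.le, hy.2⟩).1⟩
    (mem_image_of_mem h ⟨hx.1, hx.2.le⟩)

lemma MemX.integral_stieltjes_eq_intervalIntegral (hh : MemX h) {u g : ℝ → ℝ} (hu : Monotone u)
    (huc : Continuous u) (huI : Interpolates u 0 1)
    (hg : ∀ x, g x ∈ Icc (lm h (u x)) (rm h (u x))) :
    ∫ x, g x ∂hu.stieltjesFunction.measure = ∫ t in (0 : ℝ)..1, h t := by
  have hmap := hu.map_stieltjes_eq_volume_restrict huc huI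
  have hgood : ∀ᵐ w ∂hu.stieltjesFunction.measure.map u,
      w ∈ Ioo 0 1 ∧ ContinuousAt (unitIccExtend h) w := by
    have hnull := (hh.monotone_unitIccExtend.countable_not_continuousAt.union
      (countable_singleton (1 : ℝ))).measure_zero volume
    rw [hmap]
    filter_upwards [ae_restrict_mem measurableSet_Ioc,
      ae_restrict_of_ae (measure_eq_zero_iff_ae_notMem.1 hnull)] with w hw hwE
    simp only [mem_union, mem_ofPred_eq, mem_singleton_iff, not_or, not_not] at hwE
    exact ⟨⟨hw.1, lt_of_le_of_ne hw.2 hwE.2⟩, hwE.1⟩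
  have hg_ae : g =ᵐ[hu.stieltjesFunction.measure] fun x => unitIccExtend h (u x) := by
    filter_upwards [ae_of_ae_map huc.aemeasurable hgood] with x ⟨hx, hc⟩
    rw [unitIccExtend_of_mem (Ioo_subset_Icc_self hx)]
    exact le_antisymm ((hg x).2.trans (hh.rm_le (Ioo_subset_Ico_self hx) hc))
      ((hh.le_lm (Ioo_subset_Ioc_self hx) hc).trans (hg x).1)
  calc ∫ x, g x ∂hu.stieltjesFunction.measure
      = ∫ x, unitIccExtend h (u x) ∂hu.stieltjesFunction.measure := integral_congr_ae hg_ae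
    _ = ∫ w, unitIccExtend h w ∂hu.stieltjesFunction.measure.map u :=
        (integral_map huc.aemeasurable
          hh.monotone_unitIccExtend.measurable.aestronglyMeasurable).symm
    _ = ∫ t in (0 : ℝ)..1, h t := by
        rw [hmap, intervalIntegral.integral_of_le zero_le_one]
        exact setIntegral_congr_fun measurableSet_Ioc fun t ht =>
          unitIccExtend_of_mem (Ioc_subset_Icc_self ht)

lemma zero_mem_lowerBounds_Xinv_set (w : ℝ) :
    (0 : ℝ) ∈ lowerBounds ({1} ∪ {u ∈ Icc (0 : ℝ) 1 | w ≤ h u}) := by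
  rintro u (rfl | hu)
  exacts [zero_le_one, hu.1.1]

lemma Xinv_mem_Icc (w : ℝ) : Xinv h w ∈ Icc 0 1 :=
  ⟨le_csInf ⟨1, Or.inl rfl⟩ (zero_mem_lowerBounds_Xinv_set w),
    csInf_le ⟨0, zero_mem_lowerBounds_Xinv_set w⟩ (Or.inl rfl)⟩

lemma MemX.volume_lt_inter_Ioc (hh : MemX h) (w : ℝ) :
    volume ({t | unitIccExtend h t < w} ∩ Ioc 0 1) = ENNReal.ofReal (Xinv h w) := by
  refine le_antisymm ?_ ?_
  · calc volume ({t | unitIccExtend h t < w} ∩ Ioc 0 1) ≤ volume (Icc 0 (Xinv h w)) := by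
          refine measure_mono fun t ⟨ht, ht1⟩ => ⟨ht1.1.le, not_lt.1 fun hlt => ?_⟩
          obtain ⟨v, hv, hvt⟩ := exists_lt_of_csInf_lt
            (s := {1} ∪ {u ∈ Icc (0 : ℝ) 1 | w ≤ h u}) ⟨1, Or.inl rfl⟩ hlt
          rcases hv with rfl | hv
          · exact hvt.not_ge ht1.2
          · rw [mem_ofPred_eq, unitIccExtend_of_mem (Ioc_subset_Icc_self ht1)] at ht
            linarith [hv.2, hh.1 hv.1 (Ioc_subset_Icc_self ht1) hvt.le]
      _ = ENNReal.ofReal (Xinv h w) := by rw [Real.volume_Icc, sub_zero]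
  · calc ENNReal.ofReal (Xinv h w) = volume (Ioo 0 (Xinv h w)) := by
          rw [Real.volume_Ioo, sub_zero]
      _ ≤ volume ({t | unitIccExtend h t < w} ∩ Ioc 0 1) := by
          refine measure_mono fun t ⟨ht0, hts⟩ => ?_
          have ht1 : t ∈ Icc (0 : ℝ) 1 := ⟨ht0.le, hts.le.trans (Xinv_mem_Icc w).2⟩
          refine ⟨?_, ht0, ht1.2⟩
          rw [mem_ofPred_eq, unitIccExtend_of_mem ht1]
          exact not_le.1 fun hle => notMem_of_lt_csInf hts ⟨0, zero_mem_lowerBounds_Xinv_set w⟩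
            (Or.inr ⟨ht1, hle⟩)

theorem MemX.integral_Xinv_add_integral (hh : MemX h) :
    (∫ w in (0 : ℝ)..1, Xinv h w) + ∫ t in (0 : ℝ)..1, h t = 1 := by
  set ν := volume.restrict (Ioc (0 : ℝ) 1)
  -- Both integrals below compute the area of the part of the unit square above the graph of `h`.
  set S := {p : ℝ × ℝ | unitIccExtend h p.1 < p.2}
  have hS : MeasurableSet S :=
    measurableSet_lt (hh.monotone_unitIccExtend.measurable.comp measurable_fst) measurable_snd
  have h_rows : ∫ t in (0 : ℝ)..1, (1 - h t) = (ν.prod ν).real S := by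
    rw [measureReal_def, Measure.prod_apply hS, ← integral_toReal
      (measurable_measure_prodMk_left hS).aemeasurable (ae_of_all _ fun _ => measure_lt_top _ _),
      intervalIntegral.integral_of_le zero_le_one]
    refine setIntegral_congr_fun measurableSet_Ioc fun t ht => ?_
    have hht := hh.2 (Ioc_subset_Icc_self ht)
    have hrow : Prod.mk t ⁻¹' S ∩ Ioc 0 1 = Ioc (h t) 1 := by
      ext w
      simp only [S, mem_inter_iff, mem_preimage, mem_ofPred_eq, mem_Ioc,
        unitIccExtend_of_mem (Ioc_subset_Icc_self ht)]
      exact ⟨fun ⟨h1, _, h3⟩ => ⟨h1, h3⟩, fun ⟨h1, h3⟩ => ⟨h1, hht.1.trans_lt h1, h3⟩⟩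
    rw [Measure.restrict_apply (measurable_prodMk_left hS), hrow, Real.volume_Ioc,
      ENNReal.toReal_ofReal (sub_nonneg.2 hht.2)]
  have h_cols : ∫ w in (0 : ℝ)..1, Xinv h w = (ν.prod ν).real S := by
    rw [measureReal_def, Measure.prod_apply_symm hS, ← integral_toReal
      (measurable_measure_prodMk_right hS).aemeasurable (ae_of_all _ fun _ => measure_lt_top _ _),
      intervalIntegral.integral_of_le zero_le_one]
    refine integral_congr_ae (ae_of_all _ fun w => ?_)
    dsimp only
    rw [Measure.restrict_apply (measurable_prodMk_right hS)]
    exact (ENNReal.toReal_ofReal (Xinv_mem_Icc w).1).symm.trans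
      (congrArg ENNReal.toReal (hh.volume_lt_inter_Ioc w).symm)
  have hint : IntervalIntegrable h volume 0 1 :=
    MonotoneOn.intervalIntegrable (by rw [uIcc_of_le zero_le_one]; exact hh.1)
  rw [h_cols, ← h_rows, intervalIntegral.integral_sub intervalIntegrable_const hint]
  simp

end ClassX

section Wave

variable {ω f g : ℝ → ℝ}

theorem integral_conv_add_integral_conv (hω : IsAveragingKernel ω) (hf : Monotone f)
    (hfI : Interpolates f 0 1) (hg : Monotone g) (hgI : Interpolates g 0 1) (α : ℝ) :
    ∫ x, conv g ω (x + α) ∂hf.stieltjesFunction.measure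
      + ∫ y, conv f ω (y - α) ∂hg.stieltjesFunction.measure = 1 := by
  have := hf.isProbabilityMeasure_stieltjes hfI
  have := hg.isProbabilityMeasure_stieltjes hgI
  simp_rw [conv_eq_integral_kerCDF hω hg hgI, conv_eq_integral_kerCDF hω hf hfI]
  set μ := hf.stieltjesFunction.measure
  set ν := hg.stieltjesFunction.measure
  have hK₁ : Integrable (fun x => ∫ y, kerCDF ω (x + α - y) ∂ν) μ :=
    (integrable_kerCDF_comp (μ := μ.prod ν) (φ := fun p => p.1 + α - p.2) hω
      (by fun_prop)).integral_prod_left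
  have hK₂ : Integrable (fun p : ℝ × ℝ => kerCDF ω (p.2 - α - p.1)) (μ.prod ν) :=
    integrable_kerCDF_comp hω (by fun_prop)
  have hsum (x y : ℝ) : kerCDF ω (x + α - y) + kerCDF ω (y - α - x) = 1 := by
    simpa only [neg_sub, sub_sub, add_comm α x] using kerCDF_add_kerCDF_neg hω (x + α - y)
  rw [← integral_integral_swap (f := fun x y => kerCDF ω (y - α - x)) hK₂,
    ← integral_add hK₁ hK₂.integral_prod_left]
  have hinner (x : ℝ) : ∫ y, kerCDF ω (x + α - y) ∂ν + ∫ y, kerCDF ω (y - α - x) ∂ν = 1 := by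
    rw [← integral_add (integrable_kerCDF_comp hω (φ := fun y => x + α - y) (by fun_prop))
      (integrable_kerCDF_comp hω (φ := fun y => y - α - x) (by fun_prop))]
    simp [hsum]
  simp [hinner]

lemma abs_conv_sub_conv_le (hω : IsAveragingKernel ω) (hfin : eLpNorm ω ⊤ volume ≠ ⊤)
    (hf : Monotone f) (hI : Interpolates f 0 1) (y α : ℝ) :
    |conv f ω y - conv f ω (y - α)| ≤ |α| * kerSup ω := by
  have := hf.isProbabilityMeasure_stieltjes hI
  rw [conv_eq_integral_kerCDF hω hf hI, conv_eq_integral_kerCDF hω hf hI,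
    ← integral_sub (integrable_kerCDF_comp hω (by fun_prop))
      (integrable_kerCDF_comp hω (by fun_prop))]
  have hbound (x : ℝ) : ‖kerCDF ω (y - x) - kerCDF ω (y - α - x)‖ ≤ |α| * kerSup ω := by
    rw [Real.norm_eq_abs, sub_right_comm y α x]
    exact abs_kerCDF_sub_le hω hfin (y - x) α
  simpa using norm_integral_le_of_norm_le_const (μ := hf.stieltjesFunction.measure)
    (ae_of_all _ hbound)

theorem Agap_eq_integral_conv_sub (hω : IsAveragingKernel ω) {hf hg : ℝ → ℝ} {α : ℝ}
    (hhf : MemX hf) (hhg : MemX hg) (hfΨ : MemPsi f) (hgΨ : MemPsi g)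
    (hfI : Interpolates f 0 1) (hgI : Interpolates g 0 1)
    (hwave : ConsistentWave hf hg f g ω α) :
    Agap hf hg = ∫ y, (conv f ω y - conv f ω (y - α)) ∂hgΨ.monotone.stieltjesFunction.measure := by
  have := hgΨ.monotone.isProbabilityMeasure_stieltjes hgI
  have hu := monotone_conv hω hfΨ.monotone hfI
  have huc := continuous_conv hω hfΨ
  have huI := interpolates_conv hω hfΨ hfI
  have hv : Monotone fun x => conv g ω (x + α) :=
    (monotone_conv hω hgΨ.monotone hgI).comp (monotone_id.add_const α)
  have hvc : Continuous fun x => conv g ω (x + α) :=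
    (continuous_conv hω hgΨ).comp (continuous_add_const α)
  have hvI := (interpolates_conv hω hgΨ hgI).comp_add_const α
  have hXg := hhg.integral_Xinv_add_integral
  have hXf := hhf.integral_Xinv_add_integral
  have hg_eq := hhg.integral_stieltjes_eq_intervalIntegral hu huc huI hwave.2
  have hf_eq := hhf.integral_stieltjes_eq_intervalIntegral hv hvc hvI hwave.1
  have hg_parts := integral_stieltjes_add_integral_stieltjes hu huc huI hgΨ.monotone hgI
  have hf_parts := integral_stieltjes_add_integral_stieltjes hv hvc hvI hfΨ.monotone hfI
  have hpair := integral_conv_add_integral_conv hω hfΨ.monotone hfI hgΨ.monotone hgI α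
  have hu_int (c : ℝ) :
      Integrable (fun y => conv f ω (y - c)) hgΨ.monotone.stieltjesFunction.measure :=
    Integrable.of_mem_Icc 0 1 (huc.comp (continuous_sub_right c)).aemeasurable
      (ae_of_all _ fun y => hu.mem_Icc_of_interpolates huI (y - c))
  rw [integral_sub (by simpa using hu_int 0) (hu_int α), Agap, Pot]
  linarith

end Wave

/-- **Lower bound on the shift.** -/
theorem shift_lower_bound
    (ω hf hg f g : ℝ → ℝ) (α : ℝ)
    (hω : IsAveragingKernel ω)
    (hfin : eLpNorm ω ⊤ MeasureTheory.volume ≠ ⊤)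
    (hhf : MemX hf) (hhg : MemX hg)
    (hfΨ : MemPsi f) (hgΨ : MemPsi g)
    (hfI : Interpolates f 0 1) (hgI : Interpolates g 0 1)
    (hwave : ConsistentWave hf hg f g ω α) :
    |Agap hf hg| ≤ |α| * kerSup ω := by
  have := hgΨ.monotone.isProbabilityMeasure_stieltjes hgI
  rw [Agap_eq_integral_conv_sub hω hhf hhg hfΨ hgΨ hfI hgI hwave]
  simpa using norm_integral_le_of_norm_le_const (μ := hgΨ.monotone.stieltjesFunction.measure)
    (ae_of_all _ fun y => (Real.norm_eq_abs _).trans_le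
      (abs_conv_sub_conv_le hω hfin hfΨ.monotone hfI y α))
end
end

section
/- Coordinatewise convexity and minimization properties of the potential. Let (hf, hg) ∈ 𝒳². The function u ↦ Φ(hf, hg; u, v) is convex on [0,1] for each fixed v, and v ↦ Φ(hf, hg; u, v) is convex on [0,1] for each fixed u. Moreover, for all (u, v) ∈ [0,1]²: Φ(hf, hg; u, v) ≥ Φ(hf, hg; u, hf(u)) with equality if and only if v ∈ [hf(u−), hf(u+)], and Φ(hf, hg; u, v) ≥ Φ(hf, hg; hg(v), v) with equality if and only if u ∈ [hg(v−), hg(v+)]. -/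
open MeasureTheory Filter Set

noncomputable section

section Helpers

variable {h : ℝ → ℝ} {u v x : ℝ}

lemma XS_nonempty (h : ℝ → ℝ) (v : ℝ) :
    ({1} ∪ {u ∈ Icc (0:ℝ) 1 | v ≤ h u}).Nonempty := ⟨1, Or.inl rfl⟩

lemma XS_subset (h : ℝ → ℝ) (v : ℝ) :
    ({1} ∪ {u ∈ Icc (0:ℝ) 1 | v ≤ h u}) ⊆ Icc (0:ℝ) 1 := by
  rintro x (rfl | hx)
  · exact ⟨zero_le_one, le_refl 1⟩
  · exact hx.1

lemma XS_bddBelow (h : ℝ → ℝ) (v : ℝ) :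
    BddBelow ({1} ∪ {u ∈ Icc (0:ℝ) 1 | v ≤ h u}) :=
  ⟨0, fun x hx => (XS_subset h v hx).1⟩

lemma Xinv_mem (h : ℝ → ℝ) (v : ℝ) : Xinv h v ∈ Icc (0:ℝ) 1 :=
  ⟨le_csInf (XS_nonempty h v) fun b hb => (XS_subset h v hb).1,
   csInf_le (XS_bddBelow h v) (Or.inl rfl)⟩

lemma Xinv_mono (h : ℝ → ℝ) : Monotone (Xinv h) := fun a b hab =>
  csInf_le_csInf (XS_bddBelow h a) (XS_nonempty h b) (by
    rintro x (rfl | hx)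
    · exact Or.inl rfl
    · exact Or.inr ⟨hx.1, hab.trans hx.2⟩)

lemma Xinv_le (hu : u ∈ Icc (0:ℝ) 1) (hv : v ≤ h u) : Xinv h v ≤ u :=
  csInf_le (XS_bddBelow h v) (Or.inr ⟨hu, hv⟩)

lemma le_Xinv (hm : MonotoneOn h (Icc 0 1)) (hu : u ∈ Icc (0:ℝ) 1) (hv : h u < v) :
    u ≤ Xinv h v := by
  apply le_csInf (XS_nonempty h v)
  rintro b (rfl | ⟨hb, hvb⟩)
  · exact hu.2
  · by_contra hlt; push_neg at hlt
    exact absurd hv (not_lt.mpr (hvb.trans (hm hb hu hlt.le)))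

lemma lm_le (hm : MonotoneOn h (Icc 0 1)) (hmaps : MapsTo h (Icc 0 1) (Icc 0 1))
    (hu : u ∈ Icc (0:ℝ) 1) : lm h u ≤ h u := by
  rw [lm]; split_ifs with h0
  · exact (hmaps hu).1
  · push_neg at h0
    refine csSup_le ⟨h 0, 0, ⟨le_refl 0, h0⟩, rfl⟩ ?_
    rintro y ⟨w, hw, rfl⟩
    exact hm ⟨hw.1, hw.2.le.trans hu.2⟩ hu hw.2.le

lemma le_rm (hm : MonotoneOn h (Icc 0 1)) (hmaps : MapsTo h (Icc 0 1) (Icc 0 1))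
    (hu : u ∈ Icc (0:ℝ) 1) : h u ≤ rm h u := by
  rw [rm]; split_ifs with h1
  · exact (hmaps hu).2
  · push_neg at h1
    refine le_csInf ⟨h 1, 1, ⟨h1, le_refl 1⟩, rfl⟩ ?_
    rintro y ⟨w, hw, rfl⟩
    exact hm hu ⟨hu.1.trans hw.1.le, hw.2⟩ hw.1.le

lemma le_Xinv_of_lm_lt (hmaps : MapsTo h (Icc 0 1) (Icc 0 1))
    (hu : u ∈ Icc (0:ℝ) 1) (hx : lm h u < x) : u ≤ Xinv h x := by
  apply le_csInf (XS_nonempty h x)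
  rintro b (rfl | ⟨hb, hxb⟩)
  · exact hu.2
  · by_contra hlt; push_neg at hlt
    have hu0 : ¬ u ≤ 0 := fun h0 => absurd (hb.1.trans_lt hlt) (not_lt.mpr h0)
    rw [lm, if_neg hu0] at hx
    have hb' : h b ≤ sSup (h '' Ico 0 u) := by
      refine le_csSup ⟨1, ?_⟩ ⟨b, ⟨hb.1, hlt⟩, rfl⟩
      rintro y ⟨w, hw, rfl⟩
      exact (hmaps ⟨hw.1, hw.2.le.trans hu.2⟩).2
    exact absurd hx (not_lt.mpr (hxb.trans hb'))

lemma Xinv_le_of_lt_rm (hmaps : MapsTo h (Icc 0 1) (Icc 0 1))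
    (hu : u ∈ Icc (0:ℝ) 1) (hx : x < rm h u) : Xinv h x ≤ u := by
  rcases le_or_gt 1 u with h1 | h1
  · exact (Xinv_mem h x).2.trans h1
  by_contra hc; push_neg at hc
  have hc1 : Xinv h x ≤ 1 := (Xinv_mem h x).2
  set w := (u + Xinv h x) / 2 with hwdef
  have hw1 : u < w := by rw [hwdef]; linarith
  have hw2 : w < Xinv h x := by rw [hwdef]; linarith
  rw [rm, if_neg (not_le.mpr h1)] at hx
  have hsinf : sInf (h '' Ioc u 1) ≤ h w := by
    refine csInf_le ⟨0, ?_⟩ ⟨w, ⟨hw1, hw2.le.trans hc1⟩, rfl⟩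
    rintro y ⟨z, hz, rfl⟩
    exact (hmaps ⟨hu.1.trans hz.1.le, hz.2⟩).1
  have := Xinv_le (h := h) ⟨hu.1.trans hw1.le, hw2.le.trans hc1⟩ (hx.le.trans hsinf)
  exact absurd (this.trans_lt hw2) (lt_irrefl _)

lemma lt_Xinv_of_rm_lt (hm : MonotoneOn h (Icc 0 1)) (hu0 : 0 ≤ u) (hu1 : u < 1)
    (hx : rm h u < x) : u < Xinv h x := by
  rw [rm, if_neg (not_le.mpr hu1)] at hx
  have hne : (h '' Ioc u 1).Nonempty := ⟨h 1, 1, ⟨hu1, le_refl 1⟩, rfl⟩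
  obtain ⟨y, ⟨w, hw, rfl⟩, hyx⟩ := exists_lt_of_csInf_lt hne hx
  exact hw.1.trans_le (le_Xinv hm ⟨hu0.trans hw.1.le, hw.2⟩ hyx)

lemma Xinv_lt_of_lt_lm (hu : u ∈ Icc (0:ℝ) 1) (hx0 : 0 ≤ x) (hx : x < lm h u) :
    Xinv h x < u := by
  have hu0 : ¬ u ≤ 0 := by
    intro h0; rw [lm, if_pos h0] at hx; linarith
  rw [lm, if_neg hu0] at hx
  have hne : (h '' Ico 0 u).Nonempty := ⟨h 0, 0, ⟨le_refl 0, not_le.mp hu0⟩, rfl⟩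
  obtain ⟨y, ⟨w, hw, rfl⟩, hxy⟩ := exists_lt_of_lt_csSup hne hx
  exact (Xinv_le ⟨hw.1, hw.2.le.trans hu.2⟩ hxy.le).trans_lt hw.2

lemma Xinv_intInt (h : ℝ → ℝ) (a b : ℝ) : IntervalIntegrable (Xinv h) volume a b :=
  (Xinv_mono h).intervalIntegrable

lemma g_intInt (h : ℝ → ℝ) (u a b : ℝ) :
    IntervalIntegrable (fun x => Xinv h x - u) volume a b :=
  (Xinv_intInt h a b).sub intervalIntegrable_const

lemma pot_sub (hf hg : ℝ → ℝ) (u v : ℝ) :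
    Pot hf hg u v = Pot hf hg u (hf u) + ∫ x in (hf u)..v, (Xinv hf x - u) := by
  have h1 : (∫ x in (0:ℝ)..(hf u), Xinv hf x) + ∫ x in (hf u)..v, Xinv hf x
      = ∫ x in (0:ℝ)..v, Xinv hf x :=
    intervalIntegral.integral_add_adjacent_intervals (Xinv_intInt _ _ _) (Xinv_intInt _ _ _)
  rw [Pot, Pot, intervalIntegral.integral_sub (Xinv_intInt _ _ _) intervalIntegrable_const,
    intervalIntegral.integral_const, ← h1, smul_eq_mul]
  ring

lemma pot_swap (hf hg : ℝ → ℝ) (u v : ℝ) : Pot hf hg u v = Pot hg hf v u := by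
  rw [Pot, Pot]; ring

lemma ae_ne (a : ℝ) : ∀ᵐ (x : ℝ), x ≠ a := by
  refine ae_iff.mpr ?_
  simp only [not_not, setOf_eq_eq_singleton]
  exact measure_singleton a

/-- Nonnegativity of `∫_a^w (Xinv h x - u)` when `a = h u ≤ w`. -/
lemma int_nonneg_right (hm : MonotoneOn h (Icc 0 1)) (hu : u ∈ Icc (0:ℝ) 1)
    {w : ℝ} (hw : h u ≤ w) : 0 ≤ ∫ x in (h u)..w, (Xinv h x - u) := by
  apply intervalIntegral.integral_nonneg_of_ae_restrict hw
  filter_upwards [ae_restrict_of_ae (ae_ne (h u)), ae_restrict_mem measurableSet_Icc]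
    with x hxa hx
  have hax : h u < x := lt_of_le_of_ne hx.1 (Ne.symm hxa)
  exact sub_nonneg.mpr (le_Xinv hm hu hax)

/-- Nonpositivity of `∫_w^a (Xinv h x - u)` when `w ≤ a = h u`. -/
lemma int_nonpos_left (hu : u ∈ Icc (0:ℝ) 1) {w : ℝ} (hw : w ≤ h u) :
    (∫ x in w..(h u), (Xinv h x - u)) ≤ 0 := by
  have : 0 ≤ ∫ x in w..(h u), (u - Xinv h x) := by
    apply intervalIntegral.integral_nonneg hw
    intro x hx
    exact sub_nonneg.mpr (Xinv_le hu hx.2)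
  have heq : (∫ x in w..(h u), (u - Xinv h x)) = - ∫ x in w..(h u), (Xinv h x - u) := by
    rw [← intervalIntegral.integral_neg]
    congr 1; funext x; ring
  linarith [heq ▸ this]

/-- The key coordinatewise minimization lemma. -/
lemma key (hf : ℝ → ℝ) (hhf : MemX hf) {u v : ℝ} (hu : u ∈ Icc (0:ℝ) 1)
    (hv : v ∈ Icc (0:ℝ) 1) :
    (0 ≤ ∫ x in (hf u)..v, (Xinv hf x - u)) ∧
      ((∫ x in (hf u)..v, (Xinv hf x - u)) = 0 ↔ v ∈ Icc (lm hf u) (rm hf u)) := by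
  obtain ⟨hm, hmaps⟩ := hhf
  have hLa : lm hf u ≤ hf u := lm_le hm hmaps hu
  have haR : hf u ≤ rm hf u := le_rm hm hmaps hu
  have hnonneg : 0 ≤ ∫ x in (hf u)..v, (Xinv hf x - u) := by
    rcases le_total (hf u) v with hav | hva
    · exact int_nonneg_right hm hu hav
    · rw [intervalIntegral.integral_symm]
      linarith [int_nonpos_left (h := hf) hu hva]
  refine ⟨hnonneg, ?_, ?_⟩
  · -- integral = 0 → v ∈ Icc
    intro heq
    by_contra hvm
    rw [mem_Icc, not_and_or, not_le, not_le] at hvm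
    rcases hvm with hvL | hRv
    · -- v < lm hf u ≤ hf u
      have hvL' : v < hf u := hvL.trans_le hLa
      set m := (v + lm hf u) / 2 with hmdef
      have hvm' : v < m := by rw [hmdef]; linarith
      have hmL : m < lm hf u := by rw [hmdef]; linarith
      have hmA : m ≤ hf u := hmL.le.trans hLa
      have hgm : Xinv hf m - u < 0 :=
        sub_neg.mpr (Xinv_lt_of_lt_lm hu (hv.1.trans hvm'.le) hmL)
      have hsplit : (∫ x in v..(hf u), (Xinv hf x - u))
          = (∫ x in v..m, (Xinv hf x - u)) + ∫ x in m..(hf u), (Xinv hf x - u) :=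
        (intervalIntegral.integral_add_adjacent_intervals (g_intInt _ _ _ _)
          (g_intInt _ _ _ _)).symm
      have h2 : (∫ x in m..(hf u), (Xinv hf x - u)) ≤ 0 := int_nonpos_left hu hmA
      have h1 : (∫ x in v..m, (Xinv hf x - u)) ≤ (m - v) * (Xinv hf m - u) := by
        have := intervalIntegral.integral_mono_on hvm'.le (g_intInt hf u v m)
          intervalIntegrable_const
          (fun x hx => sub_le_sub_right (Xinv_mono hf hx.2) u)
        rwa [intervalIntegral.integral_const, smul_eq_mul] at this
      have hneg : (∫ x in v..(hf u), (Xinv hf x - u)) < 0 := by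
        have : (m - v) * (Xinv hf m - u) < 0 :=
          mul_neg_of_pos_of_neg (by linarith) hgm
        linarith [hsplit]
      rw [intervalIntegral.integral_symm] at heq
      linarith [heq]
    · -- rm hf u < v
      have hu1 : u < 1 := by
        by_contra h1; push_neg at h1
        rw [rm, if_pos h1] at hRv
        linarith [hv.2]
      set m := (rm hf u + v) / 2 with hmdef
      have hRm : rm hf u < m := by rw [hmdef]; linarith
      have hmv : m < v := by rw [hmdef]; linarith
      have hgm : 0 < Xinv hf m - u := sub_pos.mpr (lt_Xinv_of_rm_lt hm hu.1 hu1 hRm)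
      have hsplit : (∫ x in (hf u)..v, (Xinv hf x - u))
          = (∫ x in (hf u)..m, (Xinv hf x - u)) + ∫ x in m..v, (Xinv hf x - u) :=
        (intervalIntegral.integral_add_adjacent_intervals (g_intInt _ _ _ _)
          (g_intInt _ _ _ _)).symm
      have h1 : 0 ≤ ∫ x in (hf u)..m, (Xinv hf x - u) :=
        int_nonneg_right hm hu (haR.trans hRm.le)
      have h2 : (m - v) * 0 < (∫ x in m..v, (Xinv hf x - u)) := by
        have := intervalIntegral.integral_mono_on hmv.le intervalIntegrable_const
          (g_intInt hf u m v)
          (fun x hx => sub_le_sub_right (Xinv_mono hf hx.1) u)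
        rw [intervalIntegral.integral_const, smul_eq_mul] at this
        have hlt : (v - m) * (Xinv hf m - u) > 0 := mul_pos (by linarith) hgm
        nlinarith
      nlinarith
  · -- v ∈ Icc → integral = 0
    intro hvm
    apply intervalIntegral.integral_zero_ae
    filter_upwards [ae_ne (rm hf u)] with x hxR hxI
    rw [Set.mem_uIoc] at hxI
    have hlow : lm hf u < x := by
      rcases hxI with ⟨h1, _⟩ | ⟨h1, _⟩
      · exact hLa.trans_lt h1
      · exact hvm.1.trans_lt h1
    have hupp : x < rm hf u := by
      rcases hxI with ⟨_, h2⟩ | ⟨_, h2⟩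
      · exact lt_of_le_of_ne (h2.trans hvm.2) hxR
      · exact lt_of_le_of_ne (h2.trans haR) hxR
    have := le_antisymm (Xinv_le_of_lt_rm hmaps hu hupp) (le_Xinv_of_lm_lt hmaps hu hlow)
    rw [this]; ring

/-- Convexity of the potential in its first coordinate. -/
lemma pot_convex (hf hg : ℝ → ℝ) (v : ℝ) :
    ConvexOn ℝ (Icc (0:ℝ) 1) (fun u => Pot hf hg u v) := by
  apply convexOn_of_slope_mono_adjacent (convex_Icc 0 1)
  intro x y z _ _ hxy hyz
  have e : ∀ p q : ℝ, Pot hf hg q v - Pot hf hg p v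
      = (∫ t in p..q, Xinv hg t) - (q - p) * v := by
    intro p q
    rw [Pot, Pot, ← intervalIntegral.integral_interval_sub_left (Xinv_intInt hg 0 q)
      (Xinv_intInt hg 0 p)]
    ring
  rw [e, e, div_le_div_iff₀ (by linarith) (by linarith)]
  have h1 : (∫ t in x..y, Xinv hg t) ≤ (y - x) * Xinv hg y := by
    have := intervalIntegral.integral_mono_on hxy.le (Xinv_intInt hg x y)
      intervalIntegrable_const (fun t ht => Xinv_mono hg ht.2)
    rwa [intervalIntegral.integral_const, smul_eq_mul] at this
  have h2 : (z - y) * Xinv hg y ≤ ∫ t in y..z, Xinv hg t := by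
    have := intervalIntegral.integral_mono_on hyz.le intervalIntegrable_const
      (Xinv_intInt hg y z) (fun t ht => Xinv_mono hg ht.1)
    rwa [intervalIntegral.integral_const, smul_eq_mul] at this
  nlinarith [mul_le_mul_of_nonneg_right h1 (by linarith : (0:ℝ) ≤ z - y),
    mul_le_mul_of_nonneg_right h2 (by linarith : (0:ℝ) ≤ y - x)]

end Helpers

/-- **Coordinatewise convexity and minimization properties of the potential.** -/
theorem potential_convexity_minimization
    (hf hg : ℝ → ℝ) (hhf : MemX hf) (hhg : MemX hg) :
    (∀ v ∈ Icc (0:ℝ) 1, ConvexOn ℝ (Icc (0:ℝ) 1) (fun u => Pot hf hg u v)) ∧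
    (∀ u ∈ Icc (0:ℝ) 1, ConvexOn ℝ (Icc (0:ℝ) 1) (fun v => Pot hf hg u v)) ∧
    (∀ u ∈ Icc (0:ℝ) 1, ∀ v ∈ Icc (0:ℝ) 1,
      (Pot hf hg u (hf u) ≤ Pot hf hg u v ∧
        (Pot hf hg u v = Pot hf hg u (hf u) ↔ v ∈ Icc (lm hf u) (rm hf u))) ∧
      (Pot hf hg (hg v) v ≤ Pot hf hg u v ∧
        (Pot hf hg u v = Pot hf hg (hg v) v ↔ u ∈ Icc (lm hg v) (rm hg v)))) := by
  refine ⟨fun v _ => pot_convex hf hg v, fun u _ => ?_, fun u hu v hv => ?_⟩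
  · have : (fun v => Pot hf hg u v) = fun v => Pot hg hf v u := by
      funext w; exact pot_swap hf hg u w
    rw [this]
    exact pot_convex hg hf u
  · constructor
    · obtain ⟨hnn, hiff⟩ := key hf hhf hu hv
      constructor
      · rw [pot_sub hf hg u v]; linarith
      · rw [pot_sub hf hg u v]
        constructor
        · intro hEq; exact hiff.mp (by linarith)
        · intro hmem; rw [hiff.mpr hmem]; ring
    · obtain ⟨hnn, hiff⟩ := key hg hhg hv hu
      rw [pot_swap hf hg u v, pot_swap hf hg (hg v) v]
      constructor
      · rw [pot_sub hg hf v u]; linarith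
      · rw [pot_sub hg hf v u]
        constructor
        · intro hEq; exact hiff.mp (by linarith)
        · intro hmem; rw [hiff.mpr hmem]; ring
end
end
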